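/- Fix s ∈ (0,1) and γ ∈ ℝ, and define ã(v,η) = ⟨v⟩^γ (1 + |v|² + |η|² + |η ∧ v|²)^s on ℝ³ × ℝ³, where η ∧ v is the cross product. Then there is a constant C (depending only on s, γ) such that for all (y,η), (y',η') ∈ ℝ³ × ℝ³: ã(y,η) ≤ C ã(y',η') (⟨y − y'⟩ + ⟨η − η'⟩)^{4s + |γ|}. -/

import Mathlib

/-!
The factor `⟨y⟩^γ` is handled by Peetre's inequality `⟨x⟩^t ≤ 2^{|t|/2} ⟨y⟩^t ⟨x - y⟩^{|t|}`,
which for negative `t` is the same inequality with `x` and `y` exchanged. For the other factor,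
write `y = y' + u`, `η = η' + v`; bilinearity of the cross product and `|a ∧ b| ≤ |a| |b|` give
`|η ∧ y| ≤ |η' ∧ y'| + |η'| |u| + |v| |y'| + |v| |u|`, and then
`1 + |y|² + |η|² + |η ∧ y|² ≤ 16 (1 + |y'|² + |η'|² + |η' ∧ y'|²) ⟨u⟩² ⟨v⟩²`,
where finally `⟨u⟩ ⟨v⟩ ≤ (⟨u⟩ + ⟨v⟩)²`.
-/

/-- Cross product on `ℝ³` (Euclidean). -/
noncomputable def cross3 (u w : EuclideanSpace ℝ (Fin 3)) : EuclideanSpace ℝ (Fin 3) :=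
  (WithLp.equiv 2 (Fin 3 → ℝ)).symm
    ![u 1 * w 2 - u 2 * w 1, u 2 * w 0 - u 0 * w 2, u 0 * w 1 - u 1 * w 0]

/-- The weight `ã(v,η) = ⟨v⟩^γ (1+|v|²+|η|²+|η∧v|²)^s`. -/
noncomputable def atilde (s γ : ℝ) (v η : EuclideanSpace ℝ (Fin 3)) : ℝ :=
  Real.sqrt (1 + ‖v‖ ^ 2) ^ γ * (1 + ‖v‖ ^ 2 + ‖η‖ ^ 2 + ‖cross3 η v‖ ^ 2) ^ s

open Real Matrix WithLp

lemma rpow_le_rpow_abs_mul_rpow {a b K : ℝ} (ha : 0 < a) (hb : 0 < b) (hab : a ≤ K * b)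
    (hba : b ≤ K * a) (t : ℝ) : a ^ t ≤ K ^ |t| * b ^ t := by
  have hK : 0 < K := pos_of_mul_pos_left (ha.trans_le hab) hb.le
  rcases le_or_gt 0 t with ht | ht
  · rw [abs_of_nonneg ht, ← mul_rpow hK.le hb.le]
    exact rpow_le_rpow ha.le hab ht
  · rw [abs_of_neg ht, rpow_neg hK.le, le_inv_mul_iff₀ (rpow_pos_of_pos hK t),
      ← mul_rpow hK.le ha.le]
    exact rpow_le_rpow_of_nonpos hb hba ht.le

section Peetre

variable {E : Type*} [SeminormedAddCommGroup E]

lemma one_add_norm_sq_le_two_mul (x y : E) :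
    1 + ‖x‖ ^ 2 ≤ 2 * (1 + ‖y‖ ^ 2) * (1 + ‖x - y‖ ^ 2) := by
  have htri := norm_le_norm_add_norm_sub' x y
  nlinarith [norm_nonneg x, sq_nonneg (‖y‖ - ‖x - y‖),
    mul_nonneg (sq_nonneg ‖y‖) (sq_nonneg ‖x - y‖)]

lemma sqrt_one_add_norm_sq_le_sqrt_two_mul (x y : E) :
    √(1 + ‖x‖ ^ 2) ≤ √2 * √(1 + ‖y‖ ^ 2) * √(1 + ‖x - y‖ ^ 2) := by
  rw [← sqrt_mul zero_le_two, ← sqrt_mul (by positivity)]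
  exact sqrt_le_sqrt (one_add_norm_sq_le_two_mul x y)

theorem sqrt_one_add_norm_sq_rpow_le (t : ℝ) (x y : E) :
    √(1 + ‖x‖ ^ 2) ^ t ≤ √2 ^ |t| * √(1 + ‖y‖ ^ 2) ^ t * √(1 + ‖x - y‖ ^ 2) ^ |t| := by
  have hxy := sqrt_one_add_norm_sq_le_sqrt_two_mul x y
  have hyx := sqrt_one_add_norm_sq_le_sqrt_two_mul y x
  rw [norm_sub_rev] at hyx
  calc √(1 + ‖x‖ ^ 2) ^ t
      ≤ (√2 * √(1 + ‖x - y‖ ^ 2)) ^ |t| * √(1 + ‖y‖ ^ 2) ^ t :=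
        rpow_le_rpow_abs_mul_rpow (by positivity) (by positivity) (by linarith) (by linarith) t
    _ = √2 ^ |t| * √(1 + ‖y‖ ^ 2) ^ t * √(1 + ‖x - y‖ ^ 2) ^ |t| := by
        rw [mul_rpow (by positivity) (by positivity)]; ring

end Peetre

lemma cross3_eq_crossProduct (u w : EuclideanSpace ℝ (Fin 3)) :
    cross3 u w = toLp 2 (ofLp u ⨯₃ ofLp w) := rfl

lemma norm_cross3_sq_add_inner_sq (u w : EuclideanSpace ℝ (Fin 3)) :
    ‖cross3 u w‖ ^ 2 + inner ℝ u w ^ 2 = ‖u‖ ^ 2 * ‖w‖ ^ 2 := by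
  simp only [← real_inner_self_eq_norm_sq, cross3_eq_crossProduct,
    EuclideanSpace.inner_eq_star_dotProduct]
  simp [cross_dot_cross, dotProduct_comm]
  ring

lemma norm_cross3_le (u w : EuclideanSpace ℝ (Fin 3)) : ‖cross3 u w‖ ≤ ‖u‖ * ‖w‖ := by
  refine (pow_le_pow_iff_left₀ (norm_nonneg _) (by positivity) two_ne_zero).1 ?_
  nlinarith [norm_cross3_sq_add_inner_sq u w, sq_nonneg (inner ℝ u w)]

lemma norm_cross3_add_add_le (η v y u : EuclideanSpace ℝ (Fin 3)) :
    ‖cross3 (η + v) (y + u)‖ ≤ ‖cross3 η y‖ + ‖η‖ * ‖u‖ + ‖v‖ * ‖y‖ + ‖v‖ * ‖u‖ := by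
  have hsplit : cross3 (η + v) (y + u) = cross3 η y + cross3 η u + cross3 v y + cross3 v u := by
    simp only [cross3_eq_crossProduct, ofLp_add, map_add, LinearMap.add_apply, toLp_add]
    abel
  rw [hsplit]
  refine norm_add₄_le.trans ?_
  gcongr <;> exact norm_cross3_le _ _

lemma one_add_sq_add_sq_add_sq_le_sixteen_mul (p q c a b : ℝ) :
    1 + (p + a) ^ 2 + (q + b) ^ 2 + (c + q * a + b * p + b * a) ^ 2 ≤
      16 * (1 + p ^ 2 + q ^ 2 + c ^ 2) * ((1 + a ^ 2) * (1 + b ^ 2)) := by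
  have h₁ : (p + a) ^ 2 ≤ 2 * p ^ 2 + 2 * a ^ 2 := by nlinarith [sq_nonneg (p - a)]
  have h₂ : (q + b) ^ 2 ≤ 2 * q ^ 2 + 2 * b ^ 2 := by nlinarith [sq_nonneg (q - b)]
  have h₃ : (c + q * a + b * p + b * a) ^ 2 ≤
      4 * (c ^ 2 + q ^ 2 * a ^ 2 + b ^ 2 * p ^ 2 + b ^ 2 * a ^ 2) := by
    nlinarith [sq_nonneg (c - q * a), sq_nonneg (c - b * p), sq_nonneg (c - b * a),
      sq_nonneg (q * a - b * p), sq_nonneg (q * a - b * a), sq_nonneg (b * p - b * a)]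
  have hpa := mul_nonneg (sq_nonneg p) (sq_nonneg a)
  have hpb := mul_nonneg (sq_nonneg p) (sq_nonneg b)
  have hqa := mul_nonneg (sq_nonneg q) (sq_nonneg a)
  have hqb := mul_nonneg (sq_nonneg q) (sq_nonneg b)
  have hca := mul_nonneg (sq_nonneg c) (sq_nonneg a)
  have hcb := mul_nonneg (sq_nonneg c) (sq_nonneg b)
  nlinarith [mul_nonneg hpa (sq_nonneg b), mul_nonneg hqa (sq_nonneg b),
    mul_nonneg hca (sq_nonneg b), mul_nonneg (sq_nonneg a) (sq_nonneg b)]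

lemma weight_add_le (y η u v : EuclideanSpace ℝ (Fin 3)) :
    1 + ‖y + u‖ ^ 2 + ‖η + v‖ ^ 2 + ‖cross3 (η + v) (y + u)‖ ^ 2 ≤
      16 * (1 + ‖y‖ ^ 2 + ‖η‖ ^ 2 + ‖cross3 η y‖ ^ 2) * ((1 + ‖u‖ ^ 2) * (1 + ‖v‖ ^ 2)) := by
  calc _ ≤ 1 + (‖y‖ + ‖u‖) ^ 2 + (‖η‖ + ‖v‖) ^ 2 +
        (‖cross3 η y‖ + ‖η‖ * ‖u‖ + ‖v‖ * ‖y‖ + ‖v‖ * ‖u‖) ^ 2 := by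
        gcongr
        exacts [norm_add_le _ _, norm_add_le _ _, norm_cross3_add_add_le _ _ _ _]
    _ ≤ _ := one_add_sq_add_sq_add_sq_le_sixteen_mul _ _ _ _ _

lemma weight_rpow_le {s : ℝ} (hs : 0 ≤ s) (y η y' η' : EuclideanSpace ℝ (Fin 3)) :
    (1 + ‖y‖ ^ 2 + ‖η‖ ^ 2 + ‖cross3 η y‖ ^ 2) ^ s ≤
      16 ^ s * (1 + ‖y'‖ ^ 2 + ‖η'‖ ^ 2 + ‖cross3 η' y'‖ ^ 2) ^ s *
        (√(1 + ‖y - y'‖ ^ 2) + √(1 + ‖η - η'‖ ^ 2)) ^ (4 * s) := by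
  set U := √(1 + ‖y - y'‖ ^ 2)
  set V := √(1 + ‖η - η'‖ ^ 2)
  have hUV : (1 + ‖y - y'‖ ^ 2) * (1 + ‖η - η'‖ ^ 2) ≤ (U + V) ^ 4 := by
    rw [← sq_sqrt (zero_lt_one_add_norm_sq (y - y')).le,
      ← sq_sqrt (zero_lt_one_add_norm_sq (η - η')).le]
    have hU : 0 ≤ U := sqrt_nonneg _
    have hV : 0 ≤ V := sqrt_nonneg _
    nlinarith [mul_nonneg hU hV, mul_self_nonneg (U * V), sq_nonneg (U + V)]
  have hw := weight_add_le y' η' (y - y') (η - η')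
  simp only [add_sub_cancel] at hw
  calc _ ≤ (16 * (1 + ‖y'‖ ^ 2 + ‖η'‖ ^ 2 + ‖cross3 η' y'‖ ^ 2) *
        ((1 + ‖y - y'‖ ^ 2) * (1 + ‖η - η'‖ ^ 2))) ^ s :=
        rpow_le_rpow (by positivity) hw hs
    _ ≤ (16 * (1 + ‖y'‖ ^ 2 + ‖η'‖ ^ 2 + ‖cross3 η' y'‖ ^ 2) * (U + V) ^ 4) ^ s := by
        gcongr
    _ = _ := by
        rw [mul_rpow (by positivity) (by positivity), mul_rpow (by positivity) (by positivity),
          ← rpow_natCast_mul (by positivity)]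
        norm_num

theorem atilde_temperate_general (s γ : ℝ) (hs : 0 < s) :
    ∃ C > 0, ∀ y η y' η' : EuclideanSpace ℝ (Fin 3),
      atilde s γ y η ≤
        C * atilde s γ y' η' *
          (Real.sqrt (1 + ‖y - y'‖ ^ 2) + Real.sqrt (1 + ‖η - η'‖ ^ 2)) ^ (4 * s + |γ|) := by
  refine ⟨√2 ^ |γ| * 16 ^ s, by positivity, fun y η y' η' => ?_⟩
  set U := √(1 + ‖y - y'‖ ^ 2)
  set S := U + √(1 + ‖η - η'‖ ^ 2)
  have hUS : U ≤ S := le_add_of_nonneg_right (sqrt_nonneg _)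
  calc atilde s γ y η
      ≤ (√2 ^ |γ| * √(1 + ‖y'‖ ^ 2) ^ γ * U ^ |γ|) *
          (16 ^ s * (1 + ‖y'‖ ^ 2 + ‖η'‖ ^ 2 + ‖cross3 η' y'‖ ^ 2) ^ s * S ^ (4 * s)) :=
        mul_le_mul (sqrt_one_add_norm_sq_rpow_le γ y y') (weight_rpow_le hs.le y η y' η')
          (by positivity) (by positivity)
    _ ≤ (√2 ^ |γ| * √(1 + ‖y'‖ ^ 2) ^ γ * S ^ |γ|) *
          (16 ^ s * (1 + ‖y'‖ ^ 2 + ‖η'‖ ^ 2 + ‖cross3 η' y'‖ ^ 2) ^ s * S ^ (4 * s)) := by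
        gcongr
    _ = √2 ^ |γ| * 16 ^ s * atilde s γ y' η' * S ^ (4 * s + |γ|) := by
        rw [rpow_add (by positivity), atilde]
        ring

/-- Temperance of the weight `ã`: for some constant `C = C(s,γ)`,
`ã(y,η) ≤ C ã(y',η') (⟨y-y'⟩ + ⟨η-η'⟩)^{4s+|γ|}` for all points. -/
theorem atilde_temperate (s γ : ℝ) (hs : 0 < s) (hs1 : s < 1) :
    ∃ C > 0, ∀ y η y' η' : EuclideanSpace ℝ (Fin 3),
      atilde s γ y η ≤
        C * atilde s γ y' η' *
          (Real.sqrt (1 + ‖y - y'‖ ^ 2) + Real.sqrt (1 + ‖η - η'‖ ^ 2)) ^ (4 * s + |γ|) :=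
  atilde_temperate_general s γ hs
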